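/- arXiv:1609.04414 — 4 statements merged into one kernel-verified Lean document; each statement's English description precedes it below -/
import Mathlib

section
/- Let N ≥ 1 be an integer. The mean eigenvalue density p_N of the GUE(N) is a smooth function on ℝ and satisfies the third-order differential equation (1/N²) p_N'''(λ) + (4 − λ²) p_N'(λ) + λ p_N(λ) = 0 for all λ ∈ ℝ. -/
open MeasureTheory Real Filter Finset

/-- Hermite polynomials with parameter `N`. -/
noncomputable def hermN (N k : ℕ) (x : ℝ) : ℝ :=
  (-1 : ℝ) ^ k * Real.exp (N * x ^ 2 / 2) *
    iteratedDeriv k (fun y : ℝ => Real.exp (-(N * y ^ 2) / 2)) x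

/-- Normalized Hermite polynomials. -/
noncomputable def htilde (N k : ℕ) (x : ℝ) : ℝ :=
  hermN N k x / Real.sqrt (k.factorial * N ^ k * Real.sqrt (2 * Real.pi / N))

/-- The mean eigenvalue density of the GUE(N) ensemble. -/
noncomputable def gueDensity (N : ℕ) (t : ℝ) : ℝ :=
  (1 / N) * Real.exp (-(N * t ^ 2) / 2) * ∑ k ∈ Finset.range N, (htilde N k t) ^ 2

open Polynomial

noncomputable def Hp (N k : ℕ) (x : ℝ) : ℝ :=
  (Real.sqrt N) ^ k * Polynomial.aeval (Real.sqrt N * x) (Polynomial.hermite k)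

lemma derivative_hermite_succ (n : ℕ) :
    Polynomial.derivative (Polynomial.hermite (n+1)) = ((n : ℤ[X]) + 1) * Polynomial.hermite n := by
  induction n with
  | zero => simp [Polynomial.hermite_one, Polynomial.hermite_zero]
  | succ n ih =>
    have h' : Polynomial.derivative (Polynomial.hermite n) =
        Polynomial.X * Polynomial.hermite n - Polynomial.hermite (n+1) := by
      rw [Polynomial.hermite_succ]; ring
    have hd : Polynomial.derivative (((n : ℤ[X])+1) * Polynomial.hermite n)
        = ((n : ℤ[X])+1) * (Polynomial.X * Polynomial.hermite n - Polynomial.hermite (n+1)) := by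
      rw [Polynomial.derivative_mul, h']; simp
    rw [Polynomial.hermite_succ (n+1), Polynomial.derivative_sub, Polynomial.derivative_mul,
      Polynomial.derivative_X, ih, hd]
    push_cast
    ring

lemma Hp_zero (N : ℕ) (x : ℝ) : Hp N 0 x = 1 := by
  simp [Hp, Polynomial.hermite_zero]

lemma Hp_one (N : ℕ) (x : ℝ) : Hp N 1 x = N * x := by
  simp only [Hp, Polynomial.hermite_one, Polynomial.aeval_X, pow_one, ← mul_assoc,
    Real.mul_self_sqrt (Nat.cast_nonneg N)]

lemma Hp_succ_succ (N k : ℕ) (x : ℝ) :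
    Hp N (k+2) x = N*x*Hp N (k+1) x - ((k:ℝ)+1)*N*Hp N k x := by
  have hs : Real.sqrt (N:ℝ) * Real.sqrt (N:ℝ) = (N : ℝ) := Real.mul_self_sqrt (Nat.cast_nonneg N)
  simp only [Hp, Polynomial.hermite_succ (k+1), derivative_hermite_succ, map_sub, map_mul,
    map_add, Polynomial.aeval_X, map_natCast, map_one]
  generalize Real.sqrt (N:ℝ) = s at hs ⊢
  rw [← hs]
  ring

lemma Hp_hasDerivAt_succ (N k : ℕ) (x : ℝ) :
    HasDerivAt (Hp N (k+1)) (((k:ℝ)+1)*N*Hp N k x) x := by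
  have h0 : HasDerivAt (fun y : ℝ => Real.sqrt N * y) (Real.sqrt N) x := by
    simpa using (hasDerivAt_id x).const_mul (Real.sqrt (N:ℝ))
  have h1 := (Polynomial.hasDerivAt_aeval (q := Polynomial.hermite (k+1)) (Real.sqrt (N:ℝ) * x)).comp x h0
  have h2 := h1.const_mul ((Real.sqrt (N:ℝ))^(k+1))
  have heq : (fun y : ℝ => (Real.sqrt (N:ℝ))^(k+1) *
      ((fun z => Polynomial.aeval z (Polynomial.hermite (k+1))) ∘ fun y : ℝ => Real.sqrt N * y) y)
      = Hp N (k+1) := by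
    funext y; simp [Hp, Function.comp]
  rw [heq] at h2
  refine HasDerivAt.congr_deriv h2 (Eq.symm ?_)
  have hs : Real.sqrt (N:ℝ) * Real.sqrt (N:ℝ) = (N : ℝ) := Real.mul_self_sqrt (Nat.cast_nonneg N)
  simp only [Hp, derivative_hermite_succ, map_mul, map_add, map_natCast, map_one]
  generalize Real.sqrt (N:ℝ) = s at hs ⊢
  rw [← hs]
  ring

lemma Hp_hasDerivAt (N k : ℕ) (x : ℝ) :
    HasDerivAt (Hp N k) ((N:ℝ)*x*Hp N k x - Hp N (k+1) x) x := by
  cases k with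
  | zero =>
    have h : (Hp N 0) = fun _ : ℝ => (1:ℝ) := funext (Hp_zero N)
    rw [h]
    have := hasDerivAt_const x (1:ℝ)
    refine HasDerivAt.congr_deriv this (Eq.symm ?_)
    simp [Hp_one]
  | succ k =>
    have := Hp_hasDerivAt_succ N k x
    convert this using 1
    rw [Hp_succ_succ]
    push_cast
    ring

lemma hermN_eq (N k : ℕ) (x : ℝ) : hermN N k x = Hp N k x := by
  have hg : ContDiff ℝ (⊤ : ℕ∞) (fun z : ℝ => Real.exp (-(z^2/2))) :=
    Real.contDiff_exp.comp (((contDiff_id.pow 2).div_const 2).neg)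
  have key : (fun y : ℝ => Real.exp (-((N:ℝ)*y^2)/2))
      = fun y => (fun z : ℝ => Real.exp (-(z^2/2))) (Real.sqrt N * y) := by
    funext y
    congr 1
    rw [mul_pow, Real.sq_sqrt (Nat.cast_nonneg N)]
    ring
  rw [hermN, key, iteratedDeriv_comp_const_smul (hg.of_le (by exact_mod_cast le_top)) (Real.sqrt (N:ℝ))]
  simp only [iteratedDeriv_eq_iterate, Polynomial.deriv_gaussian_eq_hermite_mul_gaussian]
  have hsq : (Real.sqrt (N:ℝ) * x)^2 = (N:ℝ) * x^2 := by
    rw [mul_pow, Real.sq_sqrt (Nat.cast_nonneg N)]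
  rw [hsq, smul_eq_mul, Hp]
  -- finish
  have h1 : Real.exp ((N:ℝ) * x^2/2) * Real.exp (-((N:ℝ)*x^2/2)) = 1 := by
    rw [← Real.exp_add, show ((N:ℝ)*x^2/2 + -((N:ℝ)*x^2/2) : ℝ) = 0 by ring]
    exact Real.exp_zero
  have h2 : ((-1:ℝ)^k)*((-1:ℝ)^k) = 1 := by
    rw [← pow_add]
    exact Even.neg_one_pow ⟨k, rfl⟩
  calc (-1:ℝ) ^ k * Real.exp (↑N * x ^ 2 / 2) *
      (Real.sqrt ↑N ^ k * ((-1) ^ k * (Polynomial.aeval (Real.sqrt ↑N * x)) (Polynomial.hermite k) *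
        Real.exp (-(↑N * x ^ 2 / 2))))
      = (((-1:ℝ)^k)*((-1:ℝ)^k)) * (Real.exp ((N:ℝ) * x^2/2) * Real.exp (-((N:ℝ)*x^2/2))) *
        (Real.sqrt ↑N ^ k * (Polynomial.aeval (Real.sqrt ↑N * x)) (Polynomial.hermite k)) := by ring
    _ = Real.sqrt ↑N ^ k * (Polynomial.aeval (Real.sqrt ↑N * x)) (Polynomial.hermite k) := by
        rw [h1, h2]; ring

lemma CD (N : ℕ) (hN0 : (N:ℝ) ≠ 0) (m : ℕ) (t : ℝ) :
    ∑ k ∈ Finset.range (m+1), Hp N k t^2 / (k.factorial * (N:ℝ)^k) =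
    (((m:ℝ)+1)*N*Hp N m t^2 + Hp N (m+1) t^2 - N*t*Hp N m t*Hp N (m+1) t)
      / (m.factorial * (N:ℝ)^(m+1)) := by
  induction m with
  | zero =>
    simp only [Finset.sum_range_one, zero_add, Hp_zero, Hp_one, Nat.factorial_zero,
      Nat.cast_zero, Nat.cast_one]
    field_simp
    ring
  | succ m ih =>
    rw [Finset.sum_range_succ, ih, Hp_succ_succ N m t]
    have hfm : ((m.factorial : ℝ)) ≠ 0 := Nat.cast_ne_zero.mpr m.factorial_ne_zero
    have hfm1 : (((m+1).factorial : ℝ)) ≠ 0 := Nat.cast_ne_zero.mpr (m+1).factorial_ne_zero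
    have hNp : ((N:ℝ))^(m+1) ≠ 0 := pow_ne_zero _ hN0
    have hNp2 : ((N:ℝ))^(m+2) ≠ 0 := pow_ne_zero _ hN0
    rw [Nat.factorial_succ]
    push_cast
    field_simp
    ring

lemma Hp_contDiff (N k : ℕ) : ContDiff ℝ (⊤ : ℕ∞) (Hp N k) := by
  have h1 : ContDiff ℝ (⊤ : ℕ∞) (fun y : ℝ => Polynomial.aeval y (Polynomial.hermite k)) := by
    set q : Polynomial ℝ := (Polynomial.hermite k).map (algebraMap ℤ ℝ) with hq
    have he : (fun y : ℝ => Polynomial.aeval y (Polynomial.hermite k))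
        = fun y : ℝ => ∑ i ∈ Finset.range (q.natDegree + 1), q.coeff i * y ^ i := by
      funext y
      rw [Polynomial.aeval_def, Polynomial.eval₂_eq_eval_map, ← hq,
        Polynomial.eval_eq_sum_range]
    rw [he]
    exact ContDiff.sum fun i _ => contDiff_const.mul (contDiff_id.pow i)
  exact contDiff_const.mul (h1.comp (contDiff_const.mul contDiff_id))

lemma exp_gauss_contDiff (N : ℕ) : ContDiff ℝ (⊤ : ℕ∞) (fun t : ℝ => Real.exp (-((N:ℝ) * t^2)/2)) :=
  Real.contDiff_exp.comp (((contDiff_const.mul (contDiff_id.pow 2)).neg).div_const 2)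

lemma exp_gauss_hasDerivAt (N : ℕ) (t : ℝ) :
    HasDerivAt (fun t : ℝ => Real.exp (-((N:ℝ) * t^2)/2))
      (-((N:ℝ)*t) * Real.exp (-((N:ℝ) * t^2)/2)) t := by
  have h : HasDerivAt (fun t : ℝ => -((N:ℝ) * t^2)/2) (-((N:ℝ)*t)) t := by
    have := (((hasDerivAt_pow 2 t).const_mul ((N:ℝ))).neg).div_const 2
    refine HasDerivAt.congr_deriv this (Eq.symm ?_)
    simp
    ring
  have := h.exp
  convert this using 1
  ring

noncomputable def gE (N : ℕ) (t : ℝ) : ℝ := Real.exp (-((N:ℝ) * t^2)/2)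

noncomputable def G0 (M : ℕ) (t : ℝ) : ℝ :=
  gE (M+1) t * (((M:ℝ)+1)*((M:ℝ)+1)*(Hp (M+1) M t)^2 + (Hp (M+1) (M+1) t)^2
    - ((M:ℝ)+1)*t*Hp (M+1) M t*Hp (M+1) (M+1) t)

noncomputable def G1 (M : ℕ) (t : ℝ) : ℝ :=
  -(((M:ℝ)+1) * (gE (M+1) t * (Hp (M+1) M t * Hp (M+1) (M+1) t)))

noncomputable def G2 (M : ℕ) (t : ℝ) : ℝ :=
  -(((M:ℝ)+1) * (gE (M+1) t * (((M:ℝ)+1)^2*(Hp (M+1) M t)^2 - (Hp (M+1) (M+1) t)^2)))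

noncomputable def G3 (M : ℕ) (t : ℝ) : ℝ :=
  -(((M:ℝ)+1) * (gE (M+1) t * (((M:ℝ)+1)^3*t*(Hp (M+1) M t)^2 + ((M:ℝ)+1)*t*(Hp (M+1) (M+1) t)^2
    - 4*((M:ℝ)+1)^2*(Hp (M+1) M t * Hp (M+1) (M+1) t))))

lemma gE_hasDerivAt (N : ℕ) (t : ℝ) :
    HasDerivAt (gE N) (-((N:ℝ)*t) * gE N t) t := exp_gauss_hasDerivAt N t

lemma G0_hasDerivAt (M : ℕ) (t : ℝ) : HasDerivAt (G0 M) (G1 M t) t := by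
  have ha := Hp_hasDerivAt (M+1) M t
  have hb := Hp_hasDerivAt_succ (M+1) M t
  have hE := gE_hasDerivAt (M+1) t
  have h1 := ((ha.pow 2).const_mul (((M:ℝ)+1)*((M:ℝ)+1)))
  have h2 := hb.pow 2
  have h3 := (((hasDerivAt_id t).const_mul (((M:ℝ)+1))).mul ha).mul hb
  have h4 := (h1.add h2).sub h3
  have h5 := hE.mul h4
  refine HasDerivAt.congr_deriv h5 (Eq.symm ?_)
  simp only [G1, G0, gE, id_eq, Pi.mul_apply, Pi.pow_apply, Pi.sub_apply, Pi.add_apply, Pi.neg_apply]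
  push_cast
  ring_nf

lemma G1_hasDerivAt (M : ℕ) (t : ℝ) : HasDerivAt (G1 M) (G2 M t) t := by
  have ha := Hp_hasDerivAt (M+1) M t
  have hb := Hp_hasDerivAt_succ (M+1) M t
  have hE := gE_hasDerivAt (M+1) t
  have h5 := ((hE.mul (ha.mul hb)).const_mul (((M:ℝ)+1))).neg
  refine HasDerivAt.congr_deriv h5 (Eq.symm ?_)
  simp only [G2, G1, gE, id_eq, Pi.mul_apply, Pi.pow_apply, Pi.sub_apply, Pi.add_apply, Pi.neg_apply]
  push_cast
  ring_nf

lemma G2_hasDerivAt (M : ℕ) (t : ℝ) : HasDerivAt (G2 M) (G3 M t) t := by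
  have ha := Hp_hasDerivAt (M+1) M t
  have hb := Hp_hasDerivAt_succ (M+1) M t
  have hE := gE_hasDerivAt (M+1) t
  have h5 := ((hE.mul (((ha.pow 2).const_mul (((M:ℝ)+1)^2)).sub (hb.pow 2))).const_mul
    (((M:ℝ)+1))).neg
  refine HasDerivAt.congr_deriv h5 (Eq.symm ?_)
  simp only [G3, G2, gE, id_eq, Pi.mul_apply, Pi.pow_apply, Pi.sub_apply, Pi.add_apply, Pi.neg_apply]
  push_cast
  ring_nf

lemma G0_contDiff (M : ℕ) : ContDiff ℝ (⊤ : ℕ∞) (G0 M) := by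
  have hE : ContDiff ℝ (⊤ : ℕ∞) (gE (M+1)) := exp_gauss_contDiff (M+1)
  have ha : ContDiff ℝ (⊤ : ℕ∞) (Hp (M+1) M) := Hp_contDiff (M+1) M
  have hb : ContDiff ℝ (⊤ : ℕ∞) (Hp (M+1) (M+1)) := Hp_contDiff (M+1) (M+1)
  exact hE.mul ((((contDiff_const.mul (ha.pow 2))).add (hb.pow 2)).sub
    (((contDiff_const.mul contDiff_id).mul ha).mul hb))

noncomputable def kk (M : ℕ) : ℝ :=
  ((M:ℝ)+1)⁻¹ * (Real.sqrt (2*Real.pi/((M:ℝ)+1)))⁻¹ * ((M.factorial:ℝ) * ((M:ℝ)+1)^(M+1))⁻¹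

lemma gue_eq (M : ℕ) : gueDensity (M+1) = fun t => kk M * G0 M t := by
  funext t
  have hc : (((M+1:ℕ)):ℝ) ≠ 0 := by positivity
  have hterm : ∀ k, (htilde (M+1) k t)^2
      = Hp (M+1) k t ^2 / ((k.factorial:ℝ) * (((M+1:ℕ)):ℝ)^k)
        / Real.sqrt (2*Real.pi/((M+1:ℕ):ℝ)) := by
    intro k
    have hw : (0:ℝ) ≤ (k.factorial:ℝ) * (((M+1:ℕ)):ℝ)^k * Real.sqrt (2*Real.pi/((M+1:ℕ):ℝ)) := by
      positivity
    rw [htilde, div_pow, Real.sq_sqrt hw, hermN_eq, div_div]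
  rw [gueDensity]
  simp only [hterm]
  rw [← Finset.sum_div, CD (M+1) hc M t]
  simp only [kk, G0, gE]
  push_cast
  ring

theorem gue_density_ode (N : ℕ) (hN : 1 ≤ N) :
    ContDiff ℝ (⊤ : ℕ∞) (gueDensity N) ∧
    ∀ lam : ℝ,
      (1 / (N : ℝ) ^ 2) * iteratedDeriv 3 (gueDensity N) lam +
        (4 - lam ^ 2) * deriv (gueDensity N) lam + lam * gueDensity N lam = 0 := by
  obtain ⟨M, rfl⟩ : ∃ M, N = M + 1 := ⟨N - 1, (Nat.succ_pred_eq_of_pos hN).symm⟩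
  have hd0 : deriv (gueDensity (M+1)) = fun t => kk M * G1 M t := by
    funext t
    rw [gue_eq]
    exact ((G0_hasDerivAt M t).const_mul (kk M)).deriv
  have hd1 : deriv (fun t => kk M * G1 M t) = fun t => kk M * G2 M t := by
    funext t
    exact ((G1_hasDerivAt M t).const_mul (kk M)).deriv
  have hd2 : deriv (fun t => kk M * G2 M t) = fun t => kk M * G3 M t := by
    funext t
    exact ((G2_hasDerivAt M t).const_mul (kk M)).deriv
  constructor
  · rw [gue_eq]
    exact contDiff_const.mul (G0_contDiff M)
  · intro lam
    have h3 : iteratedDeriv 3 (gueDensity (M+1)) lam = kk M * G3 M lam := by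
      rw [show (3:ℕ) = 2+1 from rfl, iteratedDeriv_succ, show (2:ℕ) = 1+1 from rfl,
        iteratedDeriv_succ, iteratedDeriv_one, hd0, hd1, hd2]
    rw [h3, hd0, gue_eq]
    have hc : ((M:ℝ)+1) ≠ 0 := by positivity
    simp only [G0, G1, G3, gE]
    push_cast
    field_simp
    ring
end

section
/- Let N ≥ 1 be an integer. For all real numbers a and b, ∫_{−∞}^{∞} e^{−N x²/2} h̃_{N−1}(x + a) h̃_N(x + b) dx = Σ_{k=0}^{N−1} N^k a^k b^{k+1} · N! / ((N−k−1)! k! (k+1)!). -/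
open MeasureTheory Real Filter Finset

/-!
The polynomials `hermN N k` are the `scaledHermite N k` defined by `P₀ = 1`,
`P_{k+1} = N X P_k - P_k'`; they form an Appell sequence, `P_k' = N k P_{k-1}`, so Taylor's
formula gives `P_n(x + a) = ∑ᵢ (n choose i) (N a)^i P_{n-i}(x)`. Integration by parts against
the weight `e^{-N x²/2}` gives orthogonality, `∫ e^{-N x²/2} P_j P_k = δ_{jk} j! N^j √(2π/N)`.
Expanding both shifted polynomials, only the pairs of indices `(i, i + 1)` survive, and the
normalisations of `htilde` turn their coefficients into the stated ones.
-/

open Polynomial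

namespace Polynomial

/-- `scaledHermite 1 k` is `hermite k` mapped to `R`; over `ℝ`, for `c > 0`,
`scaledHermite c k` is `c ^ (k / 2) • He_k (√c X)` with `He_k = hermite k`. -/
noncomputable def scaledHermite {R : Type*} [CommRing R] (c : R) : ℕ → R[X]
  | 0 => 1
  | k + 1 => C c * X * scaledHermite c k - derivative (scaledHermite c k)

variable {R : Type*} [CommRing R] (c : R)

@[simp] lemma scaledHermite_zero : scaledHermite c 0 = 1 := rfl

lemma scaledHermite_succ (k : ℕ) :
    scaledHermite c (k + 1) = C c * X * scaledHermite c k - derivative (scaledHermite c k) := rfl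

lemma natDegree_scaledHermite_le (k : ℕ) : (scaledHermite c k).natDegree ≤ k := by
  induction k with
  | zero => simp
  | succ k ih =>
    have hX : (C c * X).natDegree ≤ 1 := (natDegree_C_mul_le _ _).trans natDegree_X_le
    rw [scaledHermite_succ]
    refine (natDegree_sub_le_of_le (natDegree_mul_le_of_le hX ih)
      (natDegree_derivative_le _)).trans ?_
    omega

lemma derivative_scaledHermite_succ (k : ℕ) :
    derivative (scaledHermite c (k + 1)) = C (c * (k + 1)) * scaledHermite c k := by
  induction k with
  | zero => simp [scaledHermite_succ]
  | succ k ih =>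
    rw [scaledHermite_succ c (k + 1)]
    simp only [derivative_sub, derivative_mul, ih, derivative_C, derivative_X, map_mul, map_add,
      map_natCast, map_one, derivative_natCast, derivative_one]
    rw [scaledHermite_succ]
    push_cast
    ring

lemma derivative_scaledHermite (k : ℕ) :
    derivative (scaledHermite c k) = C (c * k) * scaledHermite c (k - 1) := by
  cases k with
  | zero => simp
  | succ k => simpa using derivative_scaledHermite_succ c k

lemma iterate_derivative_scaledHermite (n i : ℕ) :
    derivative^[i] (scaledHermite c n) =
      C (c ^ i * n.descFactorial i) * scaledHermite c (n - i) := by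
  induction i with
  | zero => simp
  | succ i ih =>
    rw [Function.iterate_succ_apply', ih, derivative_C_mul, derivative_scaledHermite,
      Nat.descFactorial_succ, Nat.sub_sub, ← mul_assoc, ← C_mul]
    push_cast
    ring_nf

lemma hasseDeriv_scaledHermite [IsAddTorsionFree R] (n i : ℕ) :
    hasseDeriv i (scaledHermite c n) = C c ^ i * n.choose i * scaledHermite c (n - i) := by
  refine smul_right_injective R[X] (Nat.factorial_ne_zero i) ?_
  dsimp only
  rw [← LinearMap.smul_apply, factorial_smul_hasseDeriv, iterate_derivative_scaledHermite,
    Nat.descFactorial_eq_factorial_mul_choose]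
  simp only [nsmul_eq_mul, map_mul, map_pow, map_natCast]
  push_cast
  ring

lemma scaledHermite_eval_add [IsAddTorsionFree R] (n : ℕ) (x a : R) :
    (scaledHermite c n).eval (x + a) =
      ∑ i ∈ range (n + 1), n.choose i * c ^ i * a ^ i * (scaledHermite c (n - i)).eval x := by
  rw [add_comm, ← taylor_eval, eval_eq_sum_range' ((natDegree_taylor _ _).trans_lt
    (Nat.lt_succ_of_le (natDegree_scaledHermite_le c n)))]
  refine sum_congr rfl fun i _ => ?_
  rw [taylor_coeff, hasseDeriv_scaledHermite]
  simp only [eval_mul, eval_pow, eval_C, eval_natCast]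
  ring

end Polynomial

noncomputable def gaussWeight (c x : ℝ) : ℝ := Real.exp (-(c * x ^ 2) / 2)

lemma hasDerivAt_gaussWeight_mul_eval (c : ℝ) (p : ℝ[X]) (x : ℝ) :
    HasDerivAt (fun y => gaussWeight c y * p.eval y)
      (gaussWeight c x * (derivative p - C c * X * p).eval x) x := by
  have hexponent : HasDerivAt (fun y => -(c * y ^ 2) / 2) (-(c * x)) x :=
    (((hasDerivAt_pow 2 x).const_mul c).neg.div_const 2).congr_deriv (by ring)
  have hexp : HasDerivAt (gaussWeight c) (gaussWeight c x * -(c * x)) x := hexponent.exp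
  refine (hexp.mul (p.hasDerivAt x)).congr_deriv ?_
  simp only [eval_sub, eval_mul, eval_C, eval_X]
  ring

lemma hasDerivAt_gaussWeight_mul_scaledHermite (c : ℝ) (k : ℕ) (x : ℝ) :
    HasDerivAt (fun y => gaussWeight c y * (scaledHermite c k).eval y)
      (-(gaussWeight c x * (scaledHermite c (k + 1)).eval x)) x := by
  refine (hasDerivAt_gaussWeight_mul_eval c _ x).congr_deriv ?_
  rw [scaledHermite_succ, ← neg_sub, eval_neg, mul_neg]

lemma iteratedDeriv_gaussWeight (c : ℝ) (k : ℕ) :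
    iteratedDeriv k (gaussWeight c) =
      fun x => (-1) ^ k * (gaussWeight c x * (scaledHermite c k).eval x) := by
  induction k with
  | zero => ext x; simp
  | succ k ih =>
    ext x
    rw [iteratedDeriv_succ, ih,
      ((hasDerivAt_gaussWeight_mul_scaledHermite c k x).const_mul _).deriv]
    ring

lemma integral_gaussWeight (c : ℝ) : ∫ x, gaussWeight c x = √(2 * π / c) := by
  have h := integral_gaussian (c / 2)
  rw [div_div_eq_mul_div, mul_comm π] at h
  rw [← h]
  congr 1
  ext x
  unfold gaussWeight
  ring_nf

lemma integrable_gaussWeight_mul_eval {c : ℝ} (hc : 0 < c) (p : ℝ[X]) :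
    Integrable fun x => gaussWeight c x * p.eval x := by
  induction p using Polynomial.induction_on' with
  | add p q hp hq =>
    exact (hp.add hq).congr (Eventually.of_forall fun x => by simp [mul_add])
  | monomial n a =>
    have h := integrable_rpow_mul_exp_neg_mul_sq (half_pos hc) (s := n)
      (by linarith [(n.cast_nonneg : (0 : ℝ) ≤ n)])
    refine (h.const_mul a).congr (Eventually.of_forall fun x => ?_)
    simp only [eval_monomial, Real.rpow_natCast, gaussWeight]
    ring_nf

lemma integrable_gaussWeight_mul_eval_mul_eval {c : ℝ} (hc : 0 < c) (p q : ℝ[X]) :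
    Integrable fun x => gaussWeight c x * p.eval x * q.eval x := by
  simpa only [eval_mul, mul_assoc] using integrable_gaussWeight_mul_eval hc (p * q)

lemma integral_gaussWeight_mul_scaledHermite_succ_mul {c : ℝ} (hc : 0 < c) (j : ℕ) (q : ℝ[X]) :
    ∫ x, gaussWeight c x * (scaledHermite c (j + 1)).eval x * q.eval x =
      ∫ x, gaussWeight c x * (scaledHermite c j).eval x * (derivative q).eval x := by
  have hint := integrable_gaussWeight_mul_eval_mul_eval hc
  rw [integral_mul_deriv_eq_deriv_mul_of_integrable
    (fun x _ => hasDerivAt_gaussWeight_mul_scaledHermite c j x) (fun x _ => q.hasDerivAt x)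
    (hint _ _) ((hint (scaledHermite c (j + 1)) q).neg.congr (Eventually.of_forall fun x => by simp))
    (hint _ _), ← integral_neg]
  simp only [neg_mul, neg_neg]

lemma integral_gaussWeight_mul_scaledHermite_mul_scaledHermite {c : ℝ} (hc : 0 < c) (j k : ℕ) :
    ∫ x, gaussWeight c x * (scaledHermite c j).eval x * (scaledHermite c k).eval x =
      if j = k then j.factorial * c ^ j * √(2 * π / c) else 0 := by
  induction j generalizing k with
  | zero =>
    cases k with
    | zero => simp [integral_gaussWeight]
    | succ k =>
      simp_rw [mul_right_comm _ (eval _ (scaledHermite c 0)),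
        integral_gaussWeight_mul_scaledHermite_succ_mul hc]
      simp
  | succ j ih =>
    rw [integral_gaussWeight_mul_scaledHermite_succ_mul hc, derivative_scaledHermite]
    simp_rw [eval_mul, eval_C, mul_left_comm _ (c * k), integral_const_mul, ih]
    cases k with
    | zero => simp
    | succ k =>
      simp only [add_tsub_cancel_right, Nat.cast_add, Nat.cast_one, add_left_inj,
        Nat.factorial_succ]
      split_ifs with hjk
      · subst hjk; push_cast; ring
      · simp

lemma hermN_eq_eval_scaledHermite (N k : ℕ) (x : ℝ) :
    hermN N k x = (scaledHermite (N : ℝ) k).eval x := by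
  have hexp : Real.exp (N * x ^ 2 / 2) * gaussWeight N x = 1 := by
    rw [gaussWeight, ← Real.exp_add, ← Real.exp_zero]
    ring_nf
  have hsign : (-1 : ℝ) ^ k * (-1) ^ k = 1 := by rw [← mul_pow]; norm_num
  change _ * iteratedDeriv k (gaussWeight N) x = _
  rw [iteratedDeriv_gaussWeight]
  linear_combination eval x (scaledHermite (N : ℝ) k) * ((-1) ^ k * (-1) ^ k * hexp + hsign)

lemma integral_gaussWeight_mul_scaledHermite_add_mul_scaledHermite_add {c : ℝ} (hc : 0 < c)
    (m d : ℕ) (a b : ℝ) :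
    ∫ x, gaussWeight c x * (scaledHermite c m).eval (x + a) *
        (scaledHermite c (m + d)).eval (x + b) =
      ∑ i ∈ range (m + 1), m.choose i * (m + d).choose (i + d) * c ^ i * a ^ i *
        c ^ (i + d) * b ^ (i + d) * ((m - i).factorial * c ^ (m - i) * √(2 * π / c)) := by
  set u : ℕ → ℝ := fun i => m.choose i * c ^ i * a ^ i
  set v : ℕ → ℝ := fun j => (m + d).choose j * c ^ j * b ^ j
  have hexpand : ∀ x, gaussWeight c x * (scaledHermite c m).eval (x + a) *
      (scaledHermite c (m + d)).eval (x + b) =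
        ∑ i ∈ range (m + 1), ∑ j ∈ range (m + d + 1), u i * v j * (gaussWeight c x *
          (scaledHermite c (m - i)).eval x * (scaledHermite c (m + d - j)).eval x) := by
    intro x
    rw [scaledHermite_eval_add, scaledHermite_eval_add, mul_assoc, sum_mul_sum, mul_sum]
    refine sum_congr rfl fun i _ => ?_
    rw [mul_sum]
    refine sum_congr rfl fun j _ => ?_
    ring
  have hint := fun i j => (integrable_gaussWeight_mul_eval_mul_eval hc
    (scaledHermite c (m - i)) (scaledHermite c (m + d - j))).const_mul (u i * v j)
  simp_rw [hexpand]
  rw [integral_finsetSum _ fun i _ => integrable_finsetSum _ fun j _ => hint i j]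
  refine sum_congr rfl fun i hi => ?_
  rw [mem_range] at hi
  -- by orthogonality only `j = i + d` survives
  rw [integral_finsetSum _ fun j _ => hint i j,
    sum_eq_single_of_mem (i + d) (mem_range.mpr (by omega))]
  · rw [integral_const_mul, integral_gaussWeight_mul_scaledHermite_mul_scaledHermite hc,
      if_pos (by omega)]
    ring
  · intro j hj hji
    rw [mem_range] at hj
    rw [integral_const_mul, integral_gaussWeight_mul_scaledHermite_mul_scaledHermite hc,
      if_neg (by omega), mul_zero]

lemma htilde_mul_htilde_succ (M : ℕ) (x y : ℝ) :
    htilde (M + 1) M x * htilde (M + 1) (M + 1) y =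
      hermN (M + 1) M x * hermN (M + 1) (M + 1) y /
        (M.factorial * ((M + 1 : ℕ) : ℝ) ^ (M + 1) * √(2 * π / (M + 1 : ℕ))) := by
  set s := √(2 * π / (M + 1 : ℕ))
  have hnorm : √(M.factorial * ((M + 1 : ℕ) : ℝ) ^ M * s) *
      √((M + 1).factorial * ((M + 1 : ℕ) : ℝ) ^ (M + 1) * s) =
        M.factorial * ((M + 1 : ℕ) : ℝ) ^ (M + 1) * s := by
    rw [← Real.sqrt_mul (by positivity : (0 : ℝ) ≤ M.factorial * ((M + 1 : ℕ) : ℝ) ^ M * s),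
      ← Real.sqrt_sq (by positivity : (0 : ℝ) ≤ M.factorial * ((M + 1 : ℕ) : ℝ) ^ (M + 1) * s)]
    congr 1
    push_cast [Nat.factorial_succ]
    ring
  rw [htilde, htilde, ← hnorm]
  ring

lemma choose_mul_choose_succ_eq (i k : ℕ) :
    ((i + k).choose i : ℝ) * (i + k + 1).choose (i + 1) =
      (i + k).factorial * (i + k + 1).factorial /
        (k.factorial ^ 2 * i.factorial * (i + 1).factorial) := by
  have h1 := Nat.choose_mul_factorial_mul_factorial (Nat.le_add_right i k)
  have h2 := Nat.choose_mul_factorial_mul_factorial (by omega : i + 1 ≤ i + k + 1)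
  rw [show i + k - i = k by omega] at h1
  rw [show i + k + 1 - (i + 1) = k by omega] at h2
  rw [eq_div_iff (by positivity), ← h1, ← h2]
  push_cast
  ring

theorem hermite_cross_integral (N : ℕ) (hN : 1 ≤ N) (a b : ℝ) :
    (∫ x : ℝ, Real.exp (-(N * x ^ 2) / 2) * htilde N (N - 1) (x + a) * htilde N N (x + b)) =
      ∑ k ∈ Finset.range N,
        (N : ℝ) ^ k * a ^ k * b ^ (k + 1) * N.factorial /
          ((N - k - 1).factorial * k.factorial * (k + 1).factorial) := by
  obtain ⟨M, rfl⟩ : ∃ M, N = M + 1 := ⟨N - 1, by omega⟩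
  have hc : (0 : ℝ) < (M + 1 : ℕ) := by positivity
  have hs : 0 < √(2 * π / (M + 1 : ℕ)) := Real.sqrt_pos.mpr (by positivity)
  have hintegrand : ∀ x, Real.exp (-((M + 1 : ℕ) * x ^ 2) / 2) *
      htilde (M + 1) (M + 1 - 1) (x + a) * htilde (M + 1) (M + 1) (x + b) =
        gaussWeight (M + 1 : ℕ) x * (scaledHermite ((M + 1 : ℕ) : ℝ) M).eval (x + a) *
          (scaledHermite ((M + 1 : ℕ) : ℝ) (M + 1)).eval (x + b) /
        (M.factorial * ((M + 1 : ℕ) : ℝ) ^ (M + 1) * √(2 * π / (M + 1 : ℕ))) := by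
    intro x
    rw [Nat.add_sub_cancel, mul_assoc, htilde_mul_htilde_succ, hermN_eq_eval_scaledHermite,
      hermN_eq_eval_scaledHermite, gaussWeight]
    ring
  simp_rw [hintegrand]
  rw [integral_div, integral_gaussWeight_mul_scaledHermite_add_mul_scaledHermite_add hc M 1,
    sum_div]
  refine sum_congr rfl fun i hi => ?_
  obtain ⟨k, rfl⟩ := Nat.exists_eq_add_of_le (Nat.lt_succ_iff.mp (mem_range.mp hi))
  rw [show i + k + 1 - i - 1 = k by omega, show i + k - i = k by omega,
    choose_mul_choose_succ_eq]
  field_simp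
  ring
end

section
/- Let N ≥ 1 be an integer and s ∈ ℂ. The double series Σ_{l=0}^{∞} Σ_{k=0}^{∞} [k+1 over k+1−l] |s|^{2k} N^{−l} / (k! (k+1)!) converges, and the bilateral Laplace transform of the GUE mean eigenvalue density admits the convergent 1/N expansion ∫_{−∞}^{∞} e^{s t} p_N(t) dt = e^{s²/(2N)} · Σ_{l=0}^{∞} (−1)^l N^{−l} · ( Σ_{k=0}^{∞} [k+1 over k+1−l] s^{2k} / (k! (k+1)!) ). -/
open MeasureTheory Real Filter Finset

/-- Unsigned Stirling numbers of the first kind: `stirling1 n k` is the number of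
permutations of an `n`-element set with exactly `k` disjoint cycles.  They satisfy
`[0,0] = 1`, `[0,k+1] = 0`, and the recurrence `[n+1,k] = n·[n,k] + [n,k−1]`. -/
def stirling1 : ℕ → ℕ → ℕ
  | 0, 0 => 1
  | 0, _ + 1 => 0
  | n + 1, 0 => n * stirling1 n 0
  | n + 1, k + 1 => n * stirling1 n (k + 1) + stirling1 n k

/-
The polynomial `h_k` is `hermiteParam N k`, determined by `h_{k+1} = N x h_k - h_k'` and
satisfying `h_k' = N k h_{k-1}`. Integrating by parts against `e^{st - N t²/2}` shows that
`I(j, k) = ∫ e^{st} h_j h_k e^{-N t²/2}` obeys `I(j, k+1) = s I(j, k) + N j I(j-1, k)`, which is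
solved by `√(2π/N) e^{s²/2N}` times an explicit finite sum. On the diagonal, after summing over
`k < N` with the hockey-stick identity, the Laplace transform of `p_N` becomes
`e^{s²/2N} ∑_{k<N} C(N, k+1) s^{2k} / (k! N^{k+1})`.

On the series side, Stirling numbers of the first kind are the coefficients of the rising
factorial, so `∑_l (-1)^l [k+1, k+1-l] N^{-l} = N(N-1)⋯(N-k) / N^{k+1}`, which vanishes for
`k ≥ N`. The double series converges absolutely because each row of Stirling numbers sums to a
factorial, so the order of summation may be exchanged, giving the same finite sum.
-/

open Polynomial Nat
open scoped Complex

theorem stirling1_eq_stirlingFirst : stirling1 = stirlingFirst := by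
  have h0 : ∀ n, stirling1 (n + 1) 0 = 0 := by
    intro n
    induction n with
    | zero => rfl
    | succ n ih => show (n + 1) * stirling1 (n + 1) 0 = 0; rw [ih, mul_zero]
  funext n k
  induction n generalizing k with
  | zero => cases k <;> rfl
  | succ n ih =>
    cases k with
    | zero => simp [h0]
    | succ k => simp only [stirling1, stirlingFirst_succ_succ, ih]

section Pochhammer

variable {R : Type*}

theorem coeff_ascPochhammer [CommSemiring R] (n k : ℕ) :
    (ascPochhammer R n).coeff k = stirlingFirst n k := by
  induction n generalizing k with
  | zero => cases k <;> simp [coeff_one]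
  | succ n ih =>
    rw [ascPochhammer_succ_right, mul_add, coeff_add, ← C_eq_natCast, coeff_mul_C]
    cases k with
    | zero => cases n <;> simp [ih]
    | succ k => simp only [coeff_mul_X, ih, stirlingFirst_succ_succ]; push_cast; ring

theorem ascPochhammer_eval_eq_sum_stirlingFirst [CommSemiring R] (n : ℕ) (x : R) :
    (ascPochhammer R n).eval x = ∑ j ∈ range (n + 1), (stirlingFirst n j : R) * x ^ j := by
  have hdeg : (ascPochhammer R n).natDegree < n + 1 := by
    refine Nat.lt_succ_of_le (natDegree_le_iff_coeff_eq_zero.2 fun k hk => ?_)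
    rw [coeff_ascPochhammer, stirlingFirst_eq_zero_of_lt (by exact_mod_cast hk), Nat.cast_zero]
  simp only [eval_eq_sum_range' hdeg, coeff_ascPochhammer]

theorem sum_stirlingFirst (n : ℕ) : ∑ j ∈ range (n + 1), stirlingFirst n j = n ! := by
  simpa using (ascPochhammer_eval_eq_sum_stirlingFirst (R := ℕ) n 1).symm.trans
    (ascPochhammer_eval_one ℕ n)

theorem descPochhammer_eval_eq_sum_stirlingFirst [CommRing R] (n : ℕ) (x : R) :
    (descPochhammer R n).eval x =
      ∑ l ∈ range (n + 1), (-1) ^ l * (stirlingFirst n (n - l) : R) * x ^ (n - l) := by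
  have hasc : (descPochhammer R n).eval x = (-1) ^ n * (ascPochhammer R n).eval (-x) := by
    rw [ascPochhammer_eval_neg_eq_descPochhammer, ← mul_assoc, ← mul_pow]; simp
  rw [hasc, ascPochhammer_eval_eq_sum_stirlingFirst, mul_sum, ← sum_range_reflect]
  refine sum_congr rfl fun l hl => ?_
  obtain ⟨m, rfl⟩ : ∃ m, n = l + m := ⟨n - l, by grind⟩
  rw [show l + m + 1 - 1 - l = m by omega, show l + m - l = m by omega, neg_pow x,
    pow_add (-1 : R) l m]
  have hm : (-1 : R) ^ m * (-1) ^ m = 1 := by rw [← mul_pow]; simp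
  linear_combination ((-1) ^ l * (stirlingFirst (l + m) m : R) * x ^ m) * hm

end Pochhammer

theorem stirlingFirst_succ_sub_of_lt {k l : ℕ} (h : k + 1 < l) :
    stirlingFirst (k + 1) (k + 1 - l) = 0 := by
  rw [Nat.sub_eq_zero_of_le h.le, stirlingFirst_succ_zero]

theorem sum_stirlingFirst_sub (n : ℕ) :
    ∑ l ∈ range (n + 1), stirlingFirst n (n - l) = n ! := by
  rw [← sum_stirlingFirst, ← sum_range_reflect]
  exact sum_congr rfl fun j hj => by
    rw [Nat.add_sub_cancel, Nat.sub_sub_self (Nat.lt_succ_iff.1 (mem_range.1 hj))]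

theorem sum_neg_one_pow_mul_stirlingFirst_mul_zpow {K : Type*} [Field K] {x : K} (hx : x ≠ 0)
    (n : ℕ) :
    ∑ l ∈ range (n + 1), (-1) ^ l * (stirlingFirst n (n - l) : K) * x ^ (-(l : ℤ)) =
      (descPochhammer K n).eval x / x ^ n := by
  rw [descPochhammer_eval_eq_sum_stirlingFirst, sum_div]
  refine sum_congr rfl fun l hl => ?_
  have hln : l ≤ n := Nat.lt_succ_iff.1 (mem_range.1 hl)
  rw [zpow_neg, zpow_natCast, mul_div_assoc, pow_sub₀ x hx hln]
  field_simp

theorem summable_stirlingFirst_series {y : ℝ} (hy : 1 ≤ y) (r : ℝ) :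
    Summable fun p : ℕ × ℕ =>
      (stirlingFirst (p.2 + 1) (p.2 + 1 - p.1) : ℝ) * r ^ (2 * p.2) * y ^ (-(p.1 : ℤ)) /
        (p.2 ! * (p.2 + 1)!) := by
  set f : ℕ × ℕ → ℝ := fun p => (stirlingFirst (p.2 + 1) (p.2 + 1 - p.1) : ℝ) *
    r ^ (2 * p.2) * y ^ (-(p.1 : ℤ)) / (p.2 ! * (p.2 + 1)!)
  have hf : 0 ≤ f := fun p => by
    simp only [f, pow_mul]
    positivity
  have hrow (k : ℕ) : ∀ l ∉ range (k + 2), f (l, k) = 0 := fun l hl => by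
    simp [f, stirlingFirst_succ_sub_of_lt (not_lt.1 (mt mem_range.2 hl))]
  have hbound (k : ℕ) : ∑' l, f (l, k) ≤ (r ^ 2) ^ k / k ! := by
    rw [tsum_eq_sum (hrow k)]
    calc ∑ l ∈ range (k + 2), f (l, k)
        ≤ ∑ l ∈ range (k + 2), (stirlingFirst (k + 1) (k + 1 - l) : ℝ) *
            (r ^ (2 * k) / (k ! * (k + 1)!)) := by
          refine sum_le_sum fun l _ => ?_
          have hyl : y ^ (-(l : ℤ)) ≤ 1 := zpow_le_one_of_nonpos₀ hy (by omega)
          calc f (l, k) = (stirlingFirst (k + 1) (k + 1 - l) : ℝ) *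
                (r ^ (2 * k) / (k ! * (k + 1)!)) * y ^ (-(l : ℤ)) := by simp only [f]; ring
            _ ≤ _ := mul_le_of_le_one_right (by rw [pow_mul]; positivity) hyl
      _ = (r ^ 2) ^ k / k ! := by
          rw [← sum_mul, ← Nat.cast_sum, sum_stirlingFirst_sub, pow_mul]
          field_simp
  rw [← (Equiv.prodComm ℕ ℕ).summable_iff]
  exact (summable_prod_of_nonneg (f := f ∘ Equiv.prodComm ℕ ℕ) fun p => hf p.swap).2
    ⟨fun k => summable_of_ne_finset_zero (hrow k),
      (Real.summable_pow_div_factorial (r ^ 2)).of_nonneg_of_le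
        (fun k => tsum_nonneg fun l => hf _) hbound⟩

theorem tsum_stirlingFirst_series {N : ℕ} (hN : 0 < N) (s : ℂ) :
    ∑' l : ℕ, (-1 : ℂ) ^ l * (N : ℂ) ^ (-(l : ℤ)) *
        ∑' k : ℕ, (stirlingFirst (k + 1) (k + 1 - l) : ℂ) * s ^ (2 * k) / (k ! * (k + 1)!) =
      ∑ k ∈ range N, N.choose (k + 1) * s ^ (2 * k) / (k ! * N ^ (k + 1)) := by
  have hN0 : (N : ℂ) ≠ 0 := by exact_mod_cast hN.ne'
  set F : ℕ → ℕ → ℂ := fun l k => (-1) ^ l * (N : ℂ) ^ (-(l : ℤ)) *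
    ((stirlingFirst (k + 1) (k + 1 - l) : ℂ) * s ^ (2 * k) / (k ! * (k + 1)!))
  have hF : Summable (Function.uncurry F) := by
    refine Summable.of_norm ((summable_stirlingFirst_series (y := N) (by exact_mod_cast hN)
      ‖s‖).congr fun ⟨l, k⟩ => ?_)
    simp [F]
    ring
  have hinner (k : ℕ) : ∑' l, F l k = N.choose (k + 1) * s ^ (2 * k) / (k ! * N ^ (k + 1)) := by
    rw [tsum_eq_sum (s := range (k + 2)) fun l hl => by
      simp [F, stirlingFirst_succ_sub_of_lt (not_lt.1 (mt mem_range.2 hl))]]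
    calc ∑ l ∈ range (k + 2), F l k
        = (∑ l ∈ range (k + 2), (-1) ^ l * (stirlingFirst (k + 1) (k + 1 - l) : ℂ) *
            (N : ℂ) ^ (-(l : ℤ))) * (s ^ (2 * k) / (k ! * (k + 1)!)) := by
          rw [sum_mul]
          exact sum_congr rfl fun l _ => by simp only [F]; ring
      _ = _ := by
          rw [sum_neg_one_pow_mul_stirlingFirst_mul_zpow hN0, descPochhammer_eval_eq_descFactorial,
            Nat.descFactorial_eq_factorial_mul_choose]
          have : ((k + 1)! : ℂ) ≠ 0 := by exact_mod_cast (k + 1).factorial_ne_zero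
          push_cast
          field_simp
  calc _ = ∑' l, ∑' k, F l k := tsum_congr fun l => tsum_mul_left.symm
    _ = ∑' k, ∑' l, F l k := hF.tsum_comm.symm
    _ = _ := by
      simp only [hinner]
      exact tsum_eq_sum fun k hk => by
        simp [Nat.choose_eq_zero_of_lt (Nat.lt_succ_of_le (not_lt.1 (mt mem_range.2 hk)))]

section HermiteLaplaceCoeff

variable {R : Type*} [CommRing R]

def hermiteLaplaceCoeff (c s : R) (j k : ℕ) : R :=
  ∑ m ∈ range (k + 1), c ^ m * j.descFactorial m * k.choose m * s ^ (j - m) * s ^ (k - m)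

theorem hermiteLaplaceCoeff_zero_right (c s : R) (j : ℕ) :
    hermiteLaplaceCoeff c s j 0 = s ^ j := by
  simp [hermiteLaplaceCoeff]

theorem hermiteLaplaceCoeff_succ_right (c s : R) (j k : ℕ) :
    hermiteLaplaceCoeff c s j (k + 1) =
      s * hermiteLaplaceCoeff c s j k + c * j * hermiteLaplaceCoeff c s (j - 1) k := by
  have hfirst : ∑ m ∈ range (k + 2), c ^ m * j.descFactorial m * k.choose m * s ^ (j - m) *
      s ^ (k + 1 - m) = s * hermiteLaplaceCoeff c s j k := by
    rw [hermiteLaplaceCoeff, mul_sum, sum_range_succ, Nat.choose_succ_self, Nat.cast_zero,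
      mul_zero, zero_mul, zero_mul, add_zero]
    refine sum_congr rfl fun m hm => ?_
    rw [show k + 1 - m = k - m + 1 by grind, pow_succ]
    ring
  have hsecond : ∑ m ∈ range (k + 1), c ^ (m + 1) * j.descFactorial (m + 1) * k.choose m *
      s ^ (j - (m + 1)) * s ^ (k + 1 - (m + 1)) = c * j * hermiteLaplaceCoeff c s (j - 1) k := by
    rw [hermiteLaplaceCoeff, mul_sum]
    refine sum_congr rfl fun m _ => ?_
    rcases j with _ | j
    · simp
    · rw [Nat.succ_descFactorial_succ, show j + 1 - (m + 1) = j - m by omega,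
        show k + 1 - (m + 1) = k - m by omega, Nat.add_sub_cancel]
      push_cast
      ring
  rw [← hfirst, ← hsecond, hermiteLaplaceCoeff, sum_range_succ' _ (k + 1),
    sum_range_succ' (fun m => c ^ m * j.descFactorial m * k.choose m * _ * _), add_right_comm,
    ← sum_add_distrib]
  congr 1
  · refine sum_congr rfl fun m _ => ?_
    rw [Nat.choose_succ_succ']
    push_cast
    ring
  · simp

end HermiteLaplaceCoeff

theorem hermiteLaplaceCoeff_self_div {K : Type*} [Field K] [CharZero K] {c : K} (hc : c ≠ 0)
    (s : K) (k : ℕ) :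
    hermiteLaplaceCoeff c s k k / (c ^ (k + 1) * k !) =
      ∑ j ∈ range (k + 1), k.choose j * s ^ (2 * j) / (j ! * c ^ (j + 1)) := by
  rw [hermiteLaplaceCoeff, sum_div, ← sum_range_reflect]
  refine sum_congr rfl fun j hj => ?_
  have hjk : j ≤ k := Nat.lt_succ_iff.1 (mem_range.1 hj)
  have hfact : (j ! : K) * k.descFactorial (k - j) = k ! := by
    exact_mod_cast (Nat.sub_sub_self hjk ▸ Nat.factorial_mul_descFactorial (Nat.sub_le k j))
  have hpow : c ^ (k + 1) = c ^ (k - j) * c ^ (j + 1) := by rw [← pow_add]; congr 1; omega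
  rw [show k + 1 - 1 - j = k - j by omega, Nat.sub_sub_self hjk, Nat.choose_symm hjk, ← hfact,
    hpow]
  field_simp
  ring

theorem sum_range_sum_choose_mul {R : Type*} [CommSemiring R] (a : ℕ → R) (N : ℕ) :
    ∑ k ∈ range N, ∑ j ∈ range (k + 1), (k.choose j : R) * a j =
      ∑ j ∈ range N, (N.choose (j + 1) : R) * a j := by
  induction N with
  | zero => simp
  | succ N ih =>
    simp only [sum_range_succ _ N, ih, Nat.choose_succ_succ', Nat.cast_add, add_mul,
      sum_add_distrib, Nat.choose_succ_self, Nat.cast_zero, zero_mul, add_zero]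
    ring

section Hermite

variable {R : Type*} [CommRing R]

noncomputable def hermiteParam (c : R) : ℕ → R[X]
  | 0 => 1
  | k + 1 => C c * X * hermiteParam c k - derivative (hermiteParam c k)

theorem hermiteParam_zero (c : R) : hermiteParam c 0 = 1 := rfl

theorem hermiteParam_succ (c : R) (k : ℕ) :
    hermiteParam c (k + 1) = C c * X * hermiteParam c k - derivative (hermiteParam c k) := rfl

theorem derivative_hermiteParam (c : R) :
    ∀ k, derivative (hermiteParam c k) = C (c * k) * hermiteParam c (k - 1)
  | 0 => by simp [hermiteParam_zero]
  | 1 => by simp [hermiteParam_succ, hermiteParam_zero]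
  | k + 2 => by
    have ih := derivative_hermiteParam c (k + 1)
    rw [Nat.add_sub_cancel] at ih
    rw [show k + 2 - 1 = k + 1 by omega]
    conv_lhs => rw [hermiteParam_succ, derivative_sub, derivative_mul, derivative_mul, ih]
    rw [hermiteParam_succ c k]
    simp only [derivative_C, derivative_X, derivative_mul]
    push_cast [C_add, C_mul, C_1, map_ofNat]
    ring

end Hermite

theorem hasDerivAt_eval_mul_gaussian (c : ℝ) (p : ℝ[X]) (x : ℝ) :
    HasDerivAt (fun y => p.eval y * rexp (-(c * y ^ 2) / 2))
      (-((C c * X * p - derivative p).eval x * rexp (-(c * x ^ 2) / 2))) x := by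
  have hexp : HasDerivAt (fun y => rexp (-(c * y ^ 2) / 2))
      (rexp (-(c * x ^ 2) / 2) * (-(c * (2 * x)) / 2)) x := by
    simpa using (((hasDerivAt_pow 2 x).const_mul c).neg.div_const 2).exp
  refine ((p.hasDerivAt x).mul hexp).congr_deriv ?_
  simp only [eval_sub, eval_mul, eval_C, eval_X]
  ring

theorem iteratedDeriv_gaussian (c : ℝ) (k : ℕ) :
    iteratedDeriv k (fun y => rexp (-(c * y ^ 2) / 2)) =
      fun x => (-1) ^ k * ((hermiteParam c k).eval x * rexp (-(c * x ^ 2) / 2)) := by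
  induction k with
  | zero => simp [hermiteParam_zero]
  | succ k ih =>
    ext x
    rw [iteratedDeriv_succ, ih, ((hasDerivAt_eval_mul_gaussian c _ x).const_mul _).deriv,
      hermiteParam_succ]
    ring

theorem hermN_eq_eval (N k : ℕ) (x : ℝ) : hermN N k x = (hermiteParam (N : ℝ) k).eval x := by
  have hinv : rexp (N * x ^ 2 / 2) * rexp (-(N * x ^ 2) / 2) = 1 := by
    rw [← Real.exp_add]; simp [neg_div]
  have hsign : ((-1 : ℝ) ^ k) ^ 2 = 1 := by rw [← pow_mul, pow_mul']; simp
  rw [hermN, iteratedDeriv_gaussian]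
  calc _ = ((-1) ^ k) ^ 2 * (rexp (N * x ^ 2 / 2) * rexp (-(N * x ^ 2) / 2)) *
        (hermiteParam (N : ℝ) k).eval x := by ring
    _ = _ := by rw [hsign, hinv, one_mul, one_mul]

theorem integrable_eval_mul_exp_neg_mul_sq (p : ℝ[X]) {b : ℝ} (hb : 0 < b) :
    Integrable fun t => p.eval t * rexp (-b * t ^ 2) := by
  induction p using Polynomial.induction_on' with
  | add p q hp hq =>
    refine (hp.add hq).congr (Eventually.of_forall fun t => ?_)
    simp [add_mul]
  | monomial n a =>
    have h := integrable_rpow_mul_exp_neg_mul_sq hb (s := n)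
      (by linarith [n.cast_nonneg (α := ℝ)])
    simpa [Real.rpow_natCast, mul_assoc] using h.const_mul a

theorem integrable_eval_mul_exp_quadratic (p : ℝ[X]) (a : ℝ) {b : ℝ} (hb : 0 < b) :
    Integrable fun t => p.eval t * rexp (a * t - b * t ^ 2) := by
  have h := ((integrable_eval_mul_exp_neg_mul_sq (p.comp (X + C (a / (2 * b)))) hb).comp_sub_right
    (a / (2 * b))).const_mul (rexp (a ^ 2 / (4 * b)))
  refine h.congr (Eventually.of_forall fun t => ?_)
  simp only [eval_comp, eval_add, eval_X, eval_C, sub_add_cancel]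
  rw [mul_left_comm, ← Real.exp_add]
  congr 2
  field_simp
  ring

noncomputable def laplaceGaussIntegrand (c : ℝ) (s : ℂ) (p : ℝ[X]) (t : ℝ) : ℂ :=
  cexp (s * t) * ((p.eval t * rexp (-(c * t ^ 2) / 2) : ℝ) : ℂ)

section LaplaceGauss

variable {c : ℝ} (s : ℂ)

theorem integrable_laplaceGaussIntegrand (hc : 0 < c) (p : ℝ[X]) :
    Integrable (laplaceGaussIntegrand c s p) := by
  refine (integrable_eval_mul_exp_quadratic p s.re (half_pos hc)).norm.mono' ?_
    (Eventually.of_forall fun t => le_of_eq ?_)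
  · unfold laplaceGaussIntegrand; fun_prop
  · rw [laplaceGaussIntegrand, norm_mul, Complex.norm_exp, Complex.norm_real, norm_mul, norm_mul,
      Real.norm_of_nonneg (Real.exp_pos _).le, Real.norm_of_nonneg (Real.exp_pos _).le,
      mul_left_comm, ← Real.exp_add, Complex.re_mul_ofReal]
    ring_nf

theorem integral_laplaceGaussIntegrand_one (hc : 0 < c) :
    ∫ t, laplaceGaussIntegrand c s 1 t = √(2 * π / c) * cexp (s ^ 2 / (2 * c)) := by
  have hb : (-(c : ℂ) / 2).re < 0 := by simp; linarith
  have h := integral_cexp_quadratic hb s 0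
  have hint : ∀ t : ℝ, laplaceGaussIntegrand c s 1 t = cexp (-c / 2 * t ^ 2 + s * t + 0) := by
    intro t
    simp only [laplaceGaussIntegrand, eval_one, one_mul, Complex.ofReal_exp, ← Complex.exp_add]
    push_cast
    ring_nf
  simp_rw [hint, h]
  congr 1
  · rw [show (π : ℂ) / -(-c / 2) = ((2 * π / c : ℝ) : ℂ) by push_cast; field_simp,
      Real.sqrt_eq_rpow, Complex.ofReal_cpow (by positivity)]
    norm_num
  · congr 1
    field_simp
    ring

theorem integral_laplaceGaussIntegrand_mul_sub (hc : 0 < c) (p q : ℝ[X]) :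
    ∫ t, laplaceGaussIntegrand c s (p * (C c * X * q - derivative q)) t =
      s * (∫ t, laplaceGaussIntegrand c s (p * q) t) +
        ∫ t, laplaceGaussIntegrand c s (derivative p * q) t := by
  set u : ℝ → ℂ := fun t => cexp (s * t) * ((p.eval t : ℝ) : ℂ)
  set u' : ℝ → ℂ := fun t =>
    cexp (s * t) * (s * ((p.eval t : ℝ) : ℂ) + (((derivative p).eval t : ℝ) : ℂ))
  set v : ℝ → ℂ := fun t => ((q.eval t * rexp (-(c * t ^ 2) / 2) : ℝ) : ℂ)
  set v' : ℝ → ℂ := fun t =>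
    -(((C c * X * q - derivative q).eval t * rexp (-(c * t ^ 2) / 2) : ℝ) : ℂ)
  have hu (t : ℝ) : HasDerivAt u (u' t) t := by
    have hexp : HasDerivAt (fun t : ℝ => cexp (s * t)) (cexp (s * t) * s) t := by
      simpa using ((Complex.ofRealCLM.hasDerivAt (x := t)).const_mul s).cexp
    refine (hexp.mul (p.hasDerivAt t).ofReal_comp).congr_deriv ?_
    simp only [u']
    ring
  have hv (t : ℝ) : HasDerivAt v (v' t) t := by
    simpa only [v, v', Complex.ofReal_neg] using (hasDerivAt_eval_mul_gaussian c q t).ofReal_comp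
  have huv' : u * v' = -laplaceGaussIntegrand c s (p * (C c * X * q - derivative q)) := by
    ext t
    simp only [u, v', laplaceGaussIntegrand, Pi.mul_apply, Pi.neg_apply, eval_mul]
    push_cast
    ring
  have hu'v : u' * v = s • laplaceGaussIntegrand c s (p * q) +
      laplaceGaussIntegrand c s (derivative p * q) := by
    ext t
    simp only [u', v, laplaceGaussIntegrand, Pi.mul_apply, Pi.add_apply, Pi.smul_apply,
      smul_eq_mul, eval_mul]
    push_cast
    ring
  have huv : u * v = laplaceGaussIntegrand c s (p * q) := by
    ext t
    simp only [u, v, laplaceGaussIntegrand, Pi.mul_apply, eval_mul]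
    push_cast
    ring
  have hint := integrable_laplaceGaussIntegrand s hc
  have hparts := integral_mul_deriv_eq_deriv_mul_of_integrable (fun t _ => hu t) (fun t _ => hv t)
    (huv' ▸ (hint _).neg) (hu'v ▸ ((hint _).smul s).add (hint _)) (huv ▸ hint _)
  simp only [← Pi.mul_apply, huv', hu'v, Pi.neg_apply, integral_neg, neg_inj, Pi.add_apply,
    Pi.smul_apply, smul_eq_mul] at hparts
  rw [hparts, integral_add ((hint _).const_mul s) (hint _), integral_const_mul]

theorem laplaceGaussIntegrand_C_mul (a : ℝ) (p : ℝ[X]) (t : ℝ) :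
    laplaceGaussIntegrand c s (C a * p) t = a * laplaceGaussIntegrand c s p t := by
  simp only [laplaceGaussIntegrand, eval_mul, eval_C]
  push_cast
  ring

theorem integral_laplaceGaussIntegrand_hermiteParam_succ (hc : 0 < c) (j k : ℕ) :
    ∫ t, laplaceGaussIntegrand c s (hermiteParam c j * hermiteParam c (k + 1)) t =
      s * (∫ t, laplaceGaussIntegrand c s (hermiteParam c j * hermiteParam c k) t) +
        c * j * ∫ t, laplaceGaussIntegrand c s (hermiteParam c (j - 1) * hermiteParam c k) t := by
  rw [hermiteParam_succ c k, integral_laplaceGaussIntegrand_mul_sub s hc, derivative_hermiteParam,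
    mul_assoc]
  simp only [laplaceGaussIntegrand_C_mul, integral_const_mul]
  push_cast
  ring

theorem integral_laplaceGaussIntegrand_hermiteParam (hc : 0 < c) (j k : ℕ) :
    ∫ t, laplaceGaussIntegrand c s (hermiteParam c j * hermiteParam c k) t =
      √(2 * π / c) * cexp (s ^ 2 / (2 * c)) * hermiteLaplaceCoeff (c : ℂ) s j k := by
  induction k generalizing j with
  | zero =>
    induction j with
    | zero =>
      simp [hermiteParam_zero, integral_laplaceGaussIntegrand_one s hc,
        hermiteLaplaceCoeff_zero_right]
    | succ j ih =>
      rw [mul_comm, integral_laplaceGaussIntegrand_hermiteParam_succ s hc,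
        mul_comm (hermiteParam c 0), ih,
        hermiteLaplaceCoeff_zero_right, hermiteLaplaceCoeff_zero_right]
      push_cast
      ring
  | succ k ih =>
    rw [integral_laplaceGaussIntegrand_hermiteParam_succ s hc, ih, ih,
      hermiteLaplaceCoeff_succ_right]
    ring

end LaplaceGauss

theorem gueDensity_eq_sum (N : ℕ) (t : ℝ) :
    gueDensity N t = ∑ k ∈ range N,
      (hermiteParam (N : ℝ) k * hermiteParam (N : ℝ) k).eval t * rexp (-(N * t ^ 2) / 2) /
        (N ^ (k + 1) * k ! * √(2 * π / N)) := by
  simp only [gueDensity, htilde, hermN_eq_eval, mul_sum, div_pow, eval_mul]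
  refine sum_congr rfl fun k _ => ?_
  rw [Real.sq_sqrt (by positivity)]
  field_simp
  ring

theorem integral_cexp_mul_gueDensity {N : ℕ} (hN : 0 < N) (s : ℂ) :
    ∫ t : ℝ, cexp (s * t) * (gueDensity N t : ℂ) =
      cexp (s ^ 2 / (2 * N)) *
        ∑ k ∈ range N, N.choose (k + 1) * s ^ (2 * k) / (k ! * N ^ (k + 1)) := by
  have hc : (0 : ℝ) < N := by exact_mod_cast hN
  have hsqrt : (√(2 * π / N) : ℂ) ≠ 0 :=
    Complex.ofReal_ne_zero.2 (Real.sqrt_pos.2 (by positivity)).ne'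
  have hN0 : (N : ℂ) ≠ 0 := by exact_mod_cast hN.ne'
  have hintegrand (t : ℝ) : cexp (s * t) * (gueDensity N t : ℂ) = ∑ k ∈ range N,
      laplaceGaussIntegrand N s (hermiteParam (N : ℝ) k * hermiteParam (N : ℝ) k) t /
        (N ^ (k + 1) * k ! * √(2 * π / N) : ℝ) := by
    rw [gueDensity_eq_sum, Complex.ofReal_sum, mul_sum]
    refine sum_congr rfl fun k _ => ?_
    simp only [laplaceGaussIntegrand]
    push_cast
    ring
  simp_rw [hintegrand]
  rw [integral_finsetSum _ fun k _ => (integrable_laplaceGaussIntegrand s hc _).div_const _]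
  simp only [integral_div, integral_laplaceGaussIntegrand_hermiteParam s hc]
  calc _ = cexp (s ^ 2 / (2 * N)) * ∑ k ∈ range N,
        hermiteLaplaceCoeff (N : ℂ) s k k / ((N : ℂ) ^ (k + 1) * k !) := by
        rw [mul_sum]
        refine sum_congr rfl fun k _ => ?_
        push_cast
        field_simp
    _ = _ := by
      simp only [hermiteLaplaceCoeff_self_div hN0, mul_div_assoc]
      rw [sum_range_sum_choose_mul (fun j => s ^ (2 * j) / (j ! * (N : ℂ) ^ (j + 1))) N]

theorem laplace_one_over_N_expansion (N : ℕ) (hN : 1 ≤ N) (s : ℂ) :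
    Summable (fun p : ℕ × ℕ =>
      (stirling1 (p.2 + 1) (p.2 + 1 - p.1) : ℝ) * ‖s‖ ^ (2 * p.2) *
        (N : ℝ) ^ (-(p.1 : ℤ)) / (p.2.factorial * (p.2 + 1).factorial)) ∧
    (∫ t : ℝ, Complex.exp (s * t) * (gueDensity N t : ℂ)) =
      Complex.exp (s ^ 2 / (2 * N)) *
        ∑' l : ℕ, (-1 : ℂ) ^ l * (N : ℂ) ^ (-(l : ℤ)) *
          ∑' k : ℕ, (stirling1 (k + 1) (k + 1 - l) : ℂ) * s ^ (2 * k) /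
            (k.factorial * (k + 1).factorial) := by
  rw [stirling1_eq_stirlingFirst]
  refine ⟨summable_stirlingFirst_series (by exact_mod_cast hN) ‖s‖, ?_⟩
  rw [integral_cexp_mul_gueDensity hN, tsum_stirlingFirst_series hN]
end

section
/- For every polynomial g with real coefficients there exists a unique polynomial f with real coefficients such that g(t) − (1/(2π)) ∫_{−2}^{2} g(s) √(4 − s²) ds = (t² − 4) f'(t) + 3 t f(t) for all real t. -/
open MeasureTheory Real Filter Finset Polynomial intervalIntegral

/-!
`L f = (X² - 4) f' + 3 X f` is the Stein operator of the semicircle law, whose density is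
`√(4 - s²) / (2π)` on `[-2, 2]`. On a polynomial of degree `n` it multiplies the leading
coefficient by `n + 3` and raises the degree by one, so `L` is injective and its image together
with the constants is all of `ℝ[X]`. Since `L f · √(4 - s²)` is the derivative of
`-f(s) (4 - s²)^{3/2}`, which vanishes at `±2`, every `L f` has semicircle mean zero; hence in
`g = L f + r` the constant `r` is the semicircle mean of `g`.
-/
noncomputable def semicircleSteinOp : ℝ[X] →ₗ[ℝ] ℝ[X] :=
  LinearMap.mulLeft ℝ (X ^ 2 - C 4) ∘ₗ derivative + LinearMap.mulLeft ℝ (C 3 * X)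

lemma semicircleSteinOp_apply (f : ℝ[X]) :
    semicircleSteinOp f = (X ^ 2 - C 4) * derivative f + C 3 * X * f := rfl

lemma eval_semicircleSteinOp (f : ℝ[X]) (t : ℝ) :
    (semicircleSteinOp f).eval t = (t ^ 2 - 4) * (derivative f).eval t + 3 * t * f.eval t := by
  simp [semicircleSteinOp_apply]

lemma coeff_semicircleSteinOp_succ (f : ℝ[X]) (k : ℕ) :
    (semicircleSteinOp f).coeff (k + 1) = (k + 3) * f.coeff k - 4 * (k + 2) * f.coeff (k + 2) := by
  have hX2 : (X ^ 2 * derivative f).coeff (k + 1) = k * f.coeff k := by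
    rcases k with _ | k
    · simp [coeff_X_pow_mul']
    · rw [show k + 1 + 1 = k + 2 by ring, coeff_X_pow_mul, coeff_derivative]
      push_cast; ring
  rw [semicircleSteinOp_apply, sub_mul, coeff_add, coeff_sub, hX2, mul_assoc, coeff_C_mul,
    coeff_C_mul, coeff_X_mul, coeff_derivative]
  push_cast; ring

lemma natDegree_semicircleSteinOp_le (f : ℝ[X]) :
    (semicircleSteinOp f).natDegree ≤ f.natDegree + 1 := by
  rw [natDegree_le_iff_coeff_eq_zero]
  intro m hm
  obtain ⟨k, rfl⟩ : ∃ k, m = k + 1 := ⟨m - 1, by omega⟩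
  rw [coeff_semicircleSteinOp_succ, coeff_eq_zero_of_natDegree_lt (by omega : f.natDegree < k),
    coeff_eq_zero_of_natDegree_lt (by omega : f.natDegree < k + 2)]
  ring

lemma coeff_semicircleSteinOp_of_natDegree_le {f : ℝ[X]} {n : ℕ} (hf : f.natDegree ≤ n) :
    (semicircleSteinOp f).coeff (n + 1) = (n + 3) * f.coeff n := by
  rw [coeff_semicircleSteinOp_succ, coeff_eq_zero_of_natDegree_lt (by omega : f.natDegree < n + 2)]
  ring

lemma semicircleSteinOp_injective : Function.Injective semicircleSteinOp := by
  refine (injective_iff_map_eq_zero _).mpr fun f hf => ?_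
  by_contra hne
  have := coeff_semicircleSteinOp_of_natDegree_le (le_refl f.natDegree)
  rw [hf, coeff_zero, eq_comm, mul_eq_zero] at this
  exact this.elim (by positivity) (leadingCoeff_ne_zero.mpr hne)

lemma exists_eq_semicircleSteinOp_add_C (g : ℝ[X]) :
    ∃ f : ℝ[X], ∃ r : ℝ, g = semicircleSteinOp f + C r := by
  suffices ∀ n : ℕ, ∀ g : ℝ[X], g.natDegree ≤ n →
      ∃ f : ℝ[X], ∃ r : ℝ, g = semicircleSteinOp f + C r from this _ g le_rfl
  intro n
  induction n with
  | zero =>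
    intro g hg
    exact ⟨0, g.coeff 0, by simpa using eq_C_of_natDegree_le_zero hg⟩
  | succ n ih =>
    intro g hg
    set c := g.coeff (n + 1) / (n + 3) with hc
    have hXn : (X ^ n : ℝ[X]).natDegree ≤ n := natDegree_X_pow_le n
    have hlow : (g - semicircleSteinOp (c • X ^ n)).natDegree ≤ n := by
      rw [natDegree_le_iff_coeff_eq_zero]
      intro m hm
      rcases (Nat.succ_le_of_lt hm).eq_or_lt with rfl | hm'
      · rw [coeff_sub, map_smul, coeff_smul, coeff_semicircleSteinOp_of_natDegree_le hXn,
          coeff_X_pow_self, smul_eq_mul, hc]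
        field_simp; ring
      · rw [coeff_sub, coeff_eq_zero_of_natDegree_lt (by omega),
          coeff_eq_zero_of_natDegree_lt ((natDegree_semicircleSteinOp_le _).trans_lt ?_), sub_zero]
        have := natDegree_smul_le c (X ^ n : ℝ[X])
        omega
    obtain ⟨f, r, hf⟩ := ih _ hlow
    exact ⟨f + c • X ^ n, r, by rw [map_add, add_right_comm, ← hf]; ring⟩

lemma integral_sqrt_sq_sub_sq {r : ℝ} (hr : 0 ≤ r) :
    ∫ x in -r..r, √(r ^ 2 - x ^ 2) = π * r ^ 2 / 2 := by
  rcases hr.eq_or_lt with rfl | hr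
  · simp
  have hscale : ∀ x : ℝ, √(r ^ 2 - x ^ 2) = r * √(1 - (x / r) ^ 2) := fun x => by
    rw [show r ^ 2 - x ^ 2 = r ^ 2 * (1 - (x / r) ^ 2) by field_simp, sqrt_mul (by positivity),
      sqrt_sq hr.le]
  simp_rw [hscale, intervalIntegral.integral_const_mul,
    integral_comp_div (fun x => √(1 - x ^ 2)) hr.ne', neg_div, div_self hr.ne',
    integral_sqrt_one_sub_sq]
  ring

lemma hasDerivAt_semicircleSteinOp_antideriv (f : ℝ[X]) {x : ℝ}
    (hx : x ∈ Set.Ioo (-2 : ℝ) 2) :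
    HasDerivAt (fun s => -(f.eval s * (4 - s ^ 2) * √(4 - s ^ 2)))
      ((semicircleSteinOp f).eval x * √(4 - x ^ 2)) x := by
  have hpos : 0 < 4 - x ^ 2 := by nlinarith [hx.1, hx.2]
  have hquad : HasDerivAt (fun s : ℝ => 4 - s ^ 2) (-(2 * x)) x := by
    simpa using (hasDerivAt_pow 2 x).const_sub 4
  have hsqrt := (hasDerivAt_sqrt hpos.ne').comp x hquad
  refine ((((f.hasDerivAt x).mul hquad).mul hsqrt).neg).congr_deriv ?_
  have hsq : √(4 - x ^ 2) * √(4 - x ^ 2) = 4 - x ^ 2 := mul_self_sqrt hpos.le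
  have : √(4 - x ^ 2) ≠ 0 := by positivity
  simp only [eval_semicircleSteinOp, Pi.mul_apply, Function.comp_apply]
  field_simp
  linear_combination (-x * f.eval x) * hsq

lemma integral_eval_semicircleSteinOp_mul_sqrt (f : ℝ[X]) :
    ∫ s in (-2 : ℝ)..2, (semicircleSteinOp f).eval s * √(4 - s ^ 2) = 0 := by
  rw [integral_eq_sub_of_hasDerivAt_of_le (by norm_num) (by fun_prop)
    (fun x hx => hasDerivAt_semicircleSteinOp_antideriv f hx)
    (Continuous.intervalIntegrable (by fun_prop) _ _)]
  norm_num

lemma semicircle_average_semicircleSteinOp_add_C (f : ℝ[X]) (r : ℝ) :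
    (1 / (2 * π)) * ∫ s in (-2 : ℝ)..2, (semicircleSteinOp f + C r).eval s * √(4 - s ^ 2) =
      r := by
  have hsplit : ∫ s in (-2 : ℝ)..2, (semicircleSteinOp f + C r).eval s * √(4 - s ^ 2) =
      (∫ s in (-2 : ℝ)..2, (semicircleSteinOp f).eval s * √(4 - s ^ 2)) +
        r * ∫ s in (-2 : ℝ)..2, √(4 - s ^ 2) := by
    simp only [eval_add, eval_C, add_mul]
    rw [integral_add (Continuous.intervalIntegrable (by fun_prop) _ _)
      (Continuous.intervalIntegrable (by fun_prop) _ _), intervalIntegral.integral_const_mul]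
  have hweight : ∫ s in (-2 : ℝ)..2, √(4 - s ^ 2) = 2 * π := by
    have := integral_sqrt_sq_sub_sq (zero_le_two : (0 : ℝ) ≤ 2)
    norm_num at this
    linarith
  rw [hsplit, integral_eval_semicircleSteinOp_mul_sqrt, hweight, zero_add]
  field_simp

theorem exists_unique_S (g : Polynomial ℝ) :
    ∃! f : Polynomial ℝ, ∀ t : ℝ,
      g.eval t - (1 / (2 * Real.pi)) * ∫ s in (-2 : ℝ)..2, g.eval s * Real.sqrt (4 - s ^ 2) =
        (t ^ 2 - 4) * (Polynomial.derivative f).eval t + 3 * t * f.eval t := by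
  obtain ⟨f, r, rfl⟩ := exists_eq_semicircleSteinOp_add_C g
  simp_rw [semicircle_average_semicircleSteinOp_add_C, ← eval_semicircleSteinOp]
  refine ⟨f, fun t => by simp, fun f' hf' => semicircleSteinOp_injective (funext fun t => ?_)⟩
  simpa using (hf' t).symm
end
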